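/- For μ ∈ (0,1), the first Rayleigh sum of the positive zeros ξ_{μ,n} of the Lommel function s_{μ-1/2,1/2} satisfies ∑_{n≥1} 1/ξ_{μ,n}² = 1/((μ+2)(μ+3)). -/

import Mathlib

/-!
Expand both sides of the factorization to second order at `x = 0`. In powers of `x² / 4` the
series has coefficients bounded by `1`, so it is `1 - x² / ((μ + 2) (μ + 3)) + O(x⁴)`. With
`u n = x² / ξ n ^ 2 ≥ 0` and `t = ∑ u n`, the product `∏ (1 - u n)` lies between `1 - t`
(Weierstrass' inequality) and `exp (-t)`, so it is `1 - x² ∑ 1 / ξ n ^ 2 + O(x⁴)`.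
Comparing the coefficients of `x²` gives the sum.
-/

open Filter Topology Finset

lemma one_le_ascPochhammer_eval {a : ℝ} (ha : 1 ≤ a) (k : ℕ) :
    1 ≤ (ascPochhammer ℝ k).eval a := by
  induction k with
  | zero => simp
  | succ k ih =>
    rw [ascPochhammer_succ_eval]
    nlinarith [k.cast_nonneg (α := ℝ)]

lemma Real.exp_neg_le_one_sub_add_sq {t : ℝ} (ht : 0 ≤ t) :
    Real.exp (-t) ≤ 1 - t + t ^ 2 := by
  have hmul : Real.exp (-t) * Real.exp t = 1 := by
    rw [← Real.exp_add, neg_add_cancel, Real.exp_zero]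
  nlinarith [Real.add_one_le_exp t, Real.exp_pos (-t), pow_nonneg ht 3]

lemma one_sub_sum_le_prod_one_sub {ι : Type*} (s : Finset ι) {u : ι → ℝ}
    (h0 : ∀ i ∈ s, 0 ≤ u i) (h1 : ∀ i ∈ s, u i ≤ 1) :
    1 - ∑ i ∈ s, u i ≤ ∏ i ∈ s, (1 - u i) := by
  classical
  induction s using Finset.induction_on with
  | empty => simp
  | insert a s ha ih =>
    rw [prod_insert ha, sum_insert ha]
    have hs : 0 ≤ ∑ i ∈ s, u i := sum_nonneg fun i hi => h0 i (mem_insert_of_mem hi)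
    have ih := ih (fun i hi => h0 i (mem_insert_of_mem hi))
      (fun i hi => h1 i (mem_insert_of_mem hi))
    nlinarith [h0 a (mem_insert_self a s), h1 a (mem_insert_self a s)]

lemma abs_tprod_one_sub_sub_le {ι : Type*} {u : ι → ℝ} {t : ℝ} (hu : HasSum u t)
    (h0 : ∀ i, 0 ≤ u i) (h1 : ∀ i, u i ≤ 1) :
    |∏' i, (1 - u i) - (1 - t)| ≤ t ^ 2 := by
  have hprod : HasProd (fun i => 1 - u i) (∏' i, (1 - u i)) := by
    simpa only [sub_eq_add_neg] using
      (Real.multipliable_one_add_of_summable hu.summable.neg).hasProd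
  have hlow : 1 - t ≤ ∏' i, (1 - u i) :=
    ge_of_tendsto' hprod fun s =>
      (sub_le_sub_left (sum_le_hasSum s (fun i _ => h0 i) hu) 1).trans
        (one_sub_sum_le_prod_one_sub s (fun i _ => h0 i) fun i _ => h1 i)
  have hupp : ∏' i, (1 - u i) ≤ Real.exp (-t) :=
    le_of_tendsto_of_tendsto' hprod hu.neg.rexp fun s =>
      prod_le_prod (fun i _ => sub_nonneg.2 (h1 i)) fun _ _ => Real.one_sub_le_exp_neg _
  have ht : 0 ≤ t := hu.nonneg h0
  rw [abs_le]
  constructor <;> linarith [Real.exp_neg_le_one_sub_add_sq ht, sq_nonneg t]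

lemma abs_tsum_mul_pow_sub_le {a : ℕ → ℝ} (ha : ∀ k, |a k| ≤ 1) {y : ℝ} (hy : |y| ≤ 1 / 2) :
    |∑' k, a k * y ^ k - (a 0 + a 1 * y)| ≤ 2 * y ^ 2 := by
  have hgeom : HasSum (fun k => |y| ^ 2 * |y| ^ k) (|y| ^ 2 * (1 - |y|)⁻¹) :=
    (hasSum_geometric_of_lt_one (abs_nonneg y) (by linarith)).mul_left _
  have hbound : ∀ k, ‖a (k + 2) * y ^ (k + 2)‖ ≤ |y| ^ 2 * |y| ^ k := fun k => by
    rw [Real.norm_eq_abs, abs_mul, abs_pow, pow_add, mul_comm (|y| ^ k)]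
    exact mul_le_of_le_one_left (by positivity) (ha _)
  have hsum : Summable fun k => a k * y ^ k :=
    (summable_nat_add_iff 2).1 (hgeom.summable.of_norm_bounded hbound)
  rw [← hsum.sum_add_tsum_nat_add 2, sum_range_succ, sum_range_one, pow_zero, pow_one, mul_one,
    add_sub_cancel_left]
  calc |∑' k, a (k + 2) * y ^ (k + 2)|
      ≤ |y| ^ 2 * (1 - |y|)⁻¹ := tsum_of_norm_bounded hgeom hbound
    _ ≤ |y| ^ 2 * 2 := by gcongr; rw [inv_le_comm₀] <;> linarith [abs_nonneg y]
    _ = 2 * y ^ 2 := by rw [sq_abs, mul_comm]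

/-- The coefficients of `g_μ(z) / z` as a power series in `z² / 4`. -/
noncomputable def lommelCoeff (μ : ℝ) (k : ℕ) : ℝ :=
  (-1) ^ k / ((ascPochhammer ℝ k).eval ((μ + 2) / 2) * (ascPochhammer ℝ k).eval ((μ + 3) / 2))

lemma abs_lommelCoeff_le_one {μ : ℝ} (hμ : 0 ≤ μ) (k : ℕ) : |lommelCoeff μ k| ≤ 1 := by
  rw [lommelCoeff, abs_div, abs_pow, abs_neg, abs_one, one_pow]
  exact div_le_one_of_le₀ (le_abs.2 (Or.inl (one_le_mul_of_one_le_of_one_le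
    (one_le_ascPochhammer_eval (by linarith) k) (one_le_ascPochhammer_eval (by linarith) k))))
    (abs_nonneg _)

lemma lommel_series_term_eq {μ : ℝ} (hμ : -2 < μ) (x : ℝ) (k : ℕ) :
    (-1 : ℝ) ^ k * x ^ (2 * k) / (4 ^ k * (ascPochhammer ℝ k).eval ((μ + 2) / 2) *
      (ascPochhammer ℝ k).eval ((μ + 3) / 2)) = lommelCoeff μ k * (x ^ 2 / 4) ^ k := by
  have h1 := ascPochhammer_pos k ((μ + 2) / 2) (by linarith)
  have h2 := ascPochhammer_pos k ((μ + 3) / 2) (by linarith)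
  rw [lommelCoeff, div_pow, pow_mul]
  field_simp

lemma abs_lommel_series_sub_le {μ : ℝ} (hμ : 0 ≤ μ) {x : ℝ} (hx : x ^ 2 ≤ 2) :
    |∑' k : ℕ, (-1 : ℝ) ^ k * x ^ (2 * k) /
        (4 ^ k * (ascPochhammer ℝ k).eval ((μ + 2) / 2) * (ascPochhammer ℝ k).eval ((μ + 3) / 2))
      - (1 - x ^ 2 / ((μ + 2) * (μ + 3)))| ≤ x ^ 4 / 8 := by
  have hy : |x ^ 2 / 4| ≤ 1 / 2 := by
    rw [abs_of_nonneg (by positivity)]; linarith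
  have h := abs_tsum_mul_pow_sub_le (abs_lommelCoeff_le_one hμ) hy
  have h0 : lommelCoeff μ 0 = 1 := by simp [lommelCoeff]
  have h1 : lommelCoeff μ 1 * (x ^ 2 / 4) = -(x ^ 2 / ((μ + 2) * (μ + 3))) := by
    simp only [lommelCoeff, ascPochhammer_one, Polynomial.eval_X, pow_one]
    field_simp
    ring
  rw [h0, h1] at h
  simp only [lommel_series_term_eq (show -2 < μ by linarith)]
  convert h using 2 <;> ring

lemma eq_of_abs_sub_le_mul_sq {a b C : ℝ} (h : ∀ᶠ x in 𝓝[>] 0, |a - b| ≤ C * x ^ 2) : a = b := by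
  have hC : Tendsto (fun x : ℝ => C * x ^ 2) (𝓝[>] 0) (𝓝 0) :=
    ((continuous_const.mul (continuous_pow 2)).tendsto' 0 0 (by simp)).mono_left
      nhdsWithin_le_nhds
  exact sub_eq_zero.1 (abs_nonpos_iff.1 (ge_of_tendsto hC h))

theorem rayleigh_sum_lommel_general (μ : ℝ) (hμ : μ ∈ Set.Ioo (0 : ℝ) 1) (ξ : ℕ → ℝ)
    (hsum : Summable (fun n => 1 / (ξ n) ^ 2))
    (hfact : ∀ x : ℝ,
      ∑' k : ℕ, (-1 : ℝ) ^ k * x ^ (2 * k) /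
        (4 ^ k * (ascPochhammer ℝ k).eval ((μ + 2) / 2) *
          (ascPochhammer ℝ k).eval ((μ + 3) / 2))
      = ∏' n : ℕ, (1 - x ^ 2 / (ξ n) ^ 2)) :
    ∑' n : ℕ, 1 / (ξ n) ^ 2 = 1 / ((μ + 2) * (μ + 3)) := by
  set S := ∑' n : ℕ, 1 / (ξ n) ^ 2
  have hsq : Tendsto (fun x : ℝ => x ^ 2) (𝓝 0) (𝓝 0) := (continuous_pow 2).tendsto' 0 0 (by simp)
  have hsmall : ∀ᶠ x in 𝓝 (0 : ℝ), x ^ 2 < 2 ∧ x ^ 2 * S < 1 :=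
    (hsq.eventually_lt_const two_pos).and ((hsq.mul_const S).eventually_lt_const (by simp))
  refine eq_of_abs_sub_le_mul_sq (C := S ^ 2 + 1) ?_
  filter_upwards [nhdsWithin_le_nhds hsmall, self_mem_nhdsWithin] with x ⟨hx2, hxS⟩ hx0
  have hw : HasSum (fun n => x ^ 2 / ξ n ^ 2) (x ^ 2 * S) := by
    simpa only [mul_one_div] using hsum.hasSum.mul_left (x ^ 2)
  have hprod := abs_tprod_one_sub_sub_le hw (fun n => by positivity)
    fun n => (le_hasSum hw n fun m _ => by positivity).trans hxS.le
  have hseries := abs_lommel_series_sub_le hμ.1.le hx2.le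
  rw [hfact] at hseries
  have hx : 0 < x ^ 2 := pow_pos hx0 2
  have key :
      |x ^ 2 * (S - 1 / ((μ + 2) * (μ + 3)))| ≤ x ^ 2 * ((S ^ 2 + 1) * x ^ 2) := by
    obtain ⟨hp₁, hp₂⟩ := abs_le.1 hprod
    obtain ⟨hs₁, hs₂⟩ := abs_le.1 hseries
    rw [abs_le, mul_sub, mul_one_div]
    constructor <;> linarith [pow_nonneg (sq_nonneg x) 2]
  rw [abs_mul, abs_of_pos hx] at key
  exact le_of_mul_le_mul_left key hx

/-- For `μ ∈ (0,1)`, if `ξ n` are the positive zeros of the Lommel function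
`s_{μ-1/2,1/2}` (encoded by the factorization of the normalized Lommel function
`g_μ(z)/z = ∑ (-1)^k z^{2k}/(4^k ((μ+2)/2)_k ((μ+3)/2)_k) = ∏ (1 - z²/ξ_k²)`),
then `∑ 1/ξ_n² = 1/((μ+2)(μ+3))`. -/
theorem rayleigh_sum_lommel (μ : ℝ) (hμ : μ ∈ Set.Ioo (0 : ℝ) 1) (ξ : ℕ → ℝ)
    (hpos : ∀ n, 0 < ξ n) (hmono : StrictMono ξ)
    (hsum : Summable (fun n => 1 / (ξ n) ^ 2))
    (hfact : ∀ x : ℝ,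
      ∑' k : ℕ, (-1 : ℝ) ^ k * x ^ (2 * k) /
        (4 ^ k * (ascPochhammer ℝ k).eval ((μ + 2) / 2) *
          (ascPochhammer ℝ k).eval ((μ + 3) / 2))
      = ∏' n : ℕ, (1 - x ^ 2 / (ξ n) ^ 2)) :
    ∑' n : ℕ, 1 / (ξ n) ^ 2 = 1 / ((μ + 2) * (μ + 3)) :=
  rayleigh_sum_lommel_general μ hμ ξ hsum hfact
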